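/- Let λ > 1 and α > 2 satisfy 2λ^{−(α−2)} ≤ 1, let N₀ > 0, and set N_k = λ^k N₀ and δ_k = N_{k−1}^{−α} N_k². Then there exists a sequence (a_k)_{k∈ℕ} of positive real numbers such that (a_{k−1}/δ_k − 1)² + (a_k/δ_k)² = 1 for every k ≥ 1, and δ_{k+1} ≤ a_k ≤ 2δ_{k+1} for every k ∈ ℕ. -/
import Mathlib


open Set MeasureTheory
open scoped ENNReal BigOperators

noncomputable section

/-- Frequency scale `N_k = lam^k * N0`. -/
def freq (lam N0 : ℝ) (k : ℤ) : ℝ := lam ^ k * N0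

/-- Critical amplitude `delta_k = N_{k-1}^{-alpha} * N_k^2`. -/
def amp (lam N0 alpha : ℝ) (k : ℤ) : ℝ :=
  freq lam N0 (k - 1) ^ (-alpha) * freq lam N0 k ^ 2

/-- Existence of the nearly discretely self-similar initial data: a positive
sequence solving the circle equations: each pair `(a_{k-1}, a_k)` lies on the
circle of radius `δ_k` centered at `(δ_k, 0)`. -/
theorem circle_data_exists (lam N0 alpha : ℝ) (hlam : 1 < lam) (hα : 2 < alpha)
    (hN0 : 0 < N0) (hsmall : 2 * lam ^ (-(alpha - 2)) ≤ 1) :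
    ∃ a : ℕ → ℝ, (∀ k : ℕ, 0 < a k) ∧
      (∀ k : ℕ, 1 ≤ k →
        (a (k - 1) / amp lam N0 alpha (k : ℤ) - 1) ^ 2
          + (a k / amp lam N0 alpha (k : ℤ)) ^ 2 = 1) ∧
      (∀ k : ℕ, amp lam N0 alpha ((k : ℤ) + 1) ≤ a k ∧
        a k ≤ 2 * amp lam N0 alpha ((k : ℤ) + 1)) := by
  have lpos : (0:ℝ) < lam := lt_trans one_pos hlam
  have hfreq_pos : ∀ k : ℤ, 0 < freq lam N0 k := fun k => mul_pos (zpow_pos lpos k) hN0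
  have hamp_pos : ∀ k : ℤ, 0 < amp lam N0 alpha k := fun k =>
    mul_pos (Real.rpow_pos_of_pos (hfreq_pos _) _) (pow_pos (hfreq_pos _) 2)
  set r : ℝ := lam ^ (-(alpha - 2)) with hr
  have hrpos : 0 < r := Real.rpow_pos_of_pos lpos _
  have hr_half : r ≤ 1/2 := by linarith
  have hratio : ∀ k : ℤ, amp lam N0 alpha (k+1) = r * amp lam N0 alpha k := by
    intro k
    have h1 : freq lam N0 (k+1) = lam * freq lam N0 k := by
      unfold freq; rw [zpow_add_one₀ lpos.ne']; ring
    have h2 : freq lam N0 k = lam * freq lam N0 (k-1) := by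
      unfold freq
      rw [zpow_sub_one₀ lpos.ne']
      field_simp
    have hrd : r = lam ^ (-alpha) * lam ^ 2 := by
      rw [hr, show -(alpha - 2) = -alpha + 2 by ring, Real.rpow_add lpos,
        show ((2:ℝ) = ((2:ℕ):ℝ)) by norm_num, Real.rpow_natCast]
    have : amp lam N0 alpha (k+1)
        = (lam * freq lam N0 (k-1)) ^ (-alpha) * (lam * freq lam N0 k) ^ 2 := by
      unfold amp
      rw [show k + 1 - 1 = k by ring, h1, h2]
    rw [this, Real.mul_rpow lpos.le (hfreq_pos _).le, mul_pow, hrd]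
    unfold amp; ring
  set c : ℝ := 2 / (1 + r^2) with hc
  have hden : 0 < 1 + r^2 := by positivity
  have hrsq : r^2 ≤ 1 := by nlinarith
  have hc1 : 1 ≤ c := by rw [hc, le_div_iff₀ hden]; linarith
  have hc2 : c ≤ 2 := by rw [hc, div_le_iff₀ hden]; nlinarith
  have hkey : c * (1 + r^2) = 2 := by rw [hc]; field_simp
  refine ⟨fun k => c * amp lam N0 alpha ((k:ℤ)+1), fun k => mul_pos (by linarith) (hamp_pos _),
    ?_, fun k => ⟨le_mul_of_one_le_left (hamp_pos _).le hc1,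
      mul_le_mul_of_nonneg_right hc2 (hamp_pos _).le⟩⟩
  intro k hk
  beta_reduce
  have hcast : (((k-1:ℕ)):ℤ) + 1 = (k:ℤ) := by omega
  have hne : amp lam N0 alpha (k:ℤ) ≠ 0 := (hamp_pos _).ne'
  rw [hcast, hratio (k:ℤ)]
  rw [mul_div_assoc, div_self hne, show c * (r * amp lam N0 alpha (k:ℤ)) = (c*r) * amp lam N0 alpha (k:ℤ) by ring, mul_div_assoc, div_self hne, mul_one, mul_one]
  linear_combination c * hkey
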